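/- Let γ₁, γ₂ be modulus functions and suppose there exist a, b, δ > 0 such that a ≤ γ₁(t)/γ₂(t) ≤ b for all 0 < t < δ. Then the associated density topologies coincide: τ_{γ₁} = τ_{γ₂}. -/

import Mathlib

/-!
The comparability hypothesis says `γ₁ =Θ γ₂` along `𝓝[≥] 0` (both moduli vanish at `0`).
Both the measure `mInt A x α` of the complement and the length `2α` tend to `0` from the right
as `α → 0⁺`, so the numerators and the denominators of the two density quotients are
`Θ`-equivalent; hence one quotient tends to `0` iff the other does.
-/

open MeasureTheory Set Filter Topology

/-- γ is a modulus function (on [0,∞); values and hypotheses only matter for nonnegative arguments). -/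
def IsModulus (γ : ℝ → ℝ) : Prop :=
  (∀ a, 0 ≤ a → 0 ≤ γ a) ∧
  (∀ a, 0 ≤ a → (γ a = 0 ↔ a = 0)) ∧
  (∀ a b, 0 ≤ a → 0 ≤ b → γ (a + b) ≤ γ a + γ b) ∧
  ContinuousWithinAt γ (Set.Ici 0) 0 ∧
  (∀ a b, 0 ≤ a → a ≤ b → γ a ≤ γ b)

/-- |(x-α, x+α) ∩ Aᶜ| -/
noncomputable def mInt (A : Set ℝ) (x α : ℝ) : ℝ :=
  (volume (Set.Ioo (x - α) (x + α) ∩ Aᶜ)).toReal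

/-- x is a γ-density point of A. -/
def IsGammaDensityPt (γ : ℝ → ℝ) (A : Set ℝ) (x : ℝ) : Prop :=
  Tendsto (fun α => γ (mInt A x α) / γ (2 * α)) (𝓝[>] (0:ℝ)) (𝓝 0)

/-- x is a Lebesgue density point of A. -/
def IsLebDensityPt (A : Set ℝ) (x : ℝ) : Prop :=
  Tendsto (fun α => mInt A x α / (2 * α)) (𝓝[>] (0:ℝ)) (𝓝 0)

/-- The γ-density family. -/
def Tgamma (γ : ℝ → ℝ) : Set (Set ℝ) :=
  {A : Set ℝ | MeasurableSet A ∧ A ⊆ {x : ℝ | IsGammaDensityPt γ A x}}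

open Asymptotics

lemma IsModulus.map_zero {γ : ℝ → ℝ} (hγ : IsModulus γ) : γ 0 = 0 :=
  (hγ.2.1 0 le_rfl).mpr rfl

lemma IsModulus.pos {γ : ℝ → ℝ} (hγ : IsModulus γ) {t : ℝ} (ht : 0 < t) : 0 < γ t :=
  (hγ.1 t ht.le).lt_of_ne fun h => ht.ne' <| (hγ.2.1 t ht.le).mp h.symm

lemma mInt_nonneg (A : Set ℝ) (x α : ℝ) : 0 ≤ mInt A x α := ENNReal.toReal_nonneg

lemma mInt_le (A : Set ℝ) (x : ℝ) {α : ℝ} (hα : 0 < α) : mInt A x α ≤ 2 * α := by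
  refine ENNReal.toReal_le_of_le_ofReal (by positivity) ?_
  calc volume (Ioo (x - α) (x + α) ∩ Aᶜ) ≤ volume (Ioo (x - α) (x + α)) :=
        measure_mono inter_subset_left
    _ = ENNReal.ofReal (2 * α) := by rw [Real.volume_Ioo]; ring_nf

lemma tendsto_two_mul_nhdsGT_zero : Tendsto (fun α : ℝ => 2 * α) (𝓝[>] 0) (𝓝[>] 0) := by
  simpa using
    TendstoNhdsWithinIoi.const_mul (two_pos : (0 : ℝ) < 2) (tendsto_id (x := 𝓝[>] (0 : ℝ)))

lemma tendsto_mInt_nhdsGE_zero (A : Set ℝ) (x : ℝ) :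
    Tendsto (mInt A x) (𝓝[>] 0) (𝓝[≥] 0) := by
  refine tendsto_nhdsWithin_iff.mpr ⟨?_, Eventually.of_forall (mInt_nonneg A x)⟩
  refine squeeze_zero' (Eventually.of_forall (mInt_nonneg A x)) ?_
    (tendsto_nhds_of_tendsto_nhdsWithin tendsto_two_mul_nhdsGT_zero)
  filter_upwards [self_mem_nhdsWithin] with α hα using mInt_le A x hα

lemma isGammaDensityPt_congr {γ₁ γ₂ : ℝ → ℝ} (h : γ₁ =Θ[𝓝[≥] 0] γ₂) (A : Set ℝ) (x : ℝ) :
    IsGammaDensityPt γ₁ A x ↔ IsGammaDensityPt γ₂ A x := by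
  have hnum : (γ₁ ∘ mInt A x) =Θ[𝓝[>] 0] (γ₂ ∘ mInt A x) :=
    have hm := tendsto_mInt_nhdsGE_zero A x
    ⟨h.1.comp_tendsto hm, h.2.comp_tendsto hm⟩
  have hden : (fun α => γ₁ (2 * α)) =Θ[𝓝[>] 0] (fun α => γ₂ (2 * α)) :=
    have h2α := tendsto_two_mul_nhdsGT_zero.mono_right (nhdsWithin_mono 0 Ioi_subset_Ici_self)
    ⟨h.1.comp_tendsto h2α, h.2.comp_tendsto h2α⟩
  exact (hnum.div hden).tendsto_zero_iff

lemma Tgamma_eq_of_isTheta {γ₁ γ₂ : ℝ → ℝ} (h : γ₁ =Θ[𝓝[≥] 0] γ₂) : Tgamma γ₁ = Tgamma γ₂ := by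
  ext A
  simp only [Tgamma, mem_ofPred_eq, isGammaDensityPt_congr h]

lemma IsModulus.isTheta_of_div_bounds {γ₁ γ₂ : ℝ → ℝ} (h₁ : IsModulus γ₁) (h₂ : IsModulus γ₂)
    {a b δ : ℝ} (ha : 0 < a) (hδ : 0 < δ)
    (hcomp : ∀ t : ℝ, 0 < t → t < δ → a ≤ γ₁ t / γ₂ t ∧ γ₁ t / γ₂ t ≤ b) :
    γ₁ =Θ[𝓝[≥] 0] γ₂ := by
  have hbounds : ∀ t ∈ Ico 0 δ, 0 ≤ γ₂ t ∧ a * γ₂ t ≤ γ₁ t ∧ γ₁ t ≤ b * γ₂ t := by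
    rintro t ⟨ht₀, htδ⟩
    rcases ht₀.eq_or_lt with rfl | ht₀
    · simp [h₁.map_zero, h₂.map_zero]
    have hγ₂ := h₂.pos ht₀
    obtain ⟨hlow, hup⟩ := hcomp t ht₀ htδ
    exact ⟨hγ₂.le, (le_div_iff₀ hγ₂).mp hlow, (div_le_iff₀ hγ₂).mp hup⟩
  have hnorms : ∀ t ∈ Ico 0 δ, ‖γ₁ t‖ = γ₁ t ∧ ‖γ₂ t‖ = γ₂ t := fun t ht => by
    obtain ⟨h₀, hlow, -⟩ := hbounds t ht
    exact ⟨Real.norm_of_nonneg ((mul_nonneg ha.le h₀).trans hlow), Real.norm_of_nonneg h₀⟩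
  refine ⟨IsBigO.of_bound b ?_, IsBigO.of_bound a⁻¹ ?_⟩ <;>
    filter_upwards [Ico_mem_nhdsGE hδ] with t ht
  · rw [(hnorms t ht).1, (hnorms t ht).2]
    exact (hbounds t ht).2.2
  · rw [(hnorms t ht).1, (hnorms t ht).2, ← div_eq_inv_mul, le_div_iff₀ ha, mul_comm]
    exact (hbounds t ht).2.1

theorem stmt15_general (γ₁ γ₂ : ℝ → ℝ) (h₁ : IsModulus γ₁) (h₂ : IsModulus γ₂)
    (a b δ : ℝ) (ha : 0 < a) (hδ : 0 < δ)
    (hcomp : ∀ t : ℝ, 0 < t → t < δ → a ≤ γ₁ t / γ₂ t ∧ γ₁ t / γ₂ t ≤ b) :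
    Tgamma γ₁ = Tgamma γ₂ :=
  Tgamma_eq_of_isTheta (h₁.isTheta_of_div_bounds h₂ ha hδ hcomp)

theorem stmt15 (γ₁ γ₂ : ℝ → ℝ) (h₁ : IsModulus γ₁) (h₂ : IsModulus γ₂)
    (a b δ : ℝ) (ha : 0 < a) (hb : 0 < b) (hδ : 0 < δ)
    (hcomp : ∀ t : ℝ, 0 < t → t < δ → a ≤ γ₁ t / γ₂ t ∧ γ₁ t / γ₂ t ≤ b) :
    Tgamma γ₁ = Tgamma γ₂ :=
  stmt15_general γ₁ γ₂ h₁ h₂ a b δ ha hδ hcomp
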